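/- Let V ⊂ ℝ² be a Euclidean TSP instance and T a 2-optimal tour for V. If V' is a subdivision for (V,T), then the tour T' induced by V' is a 2-optimal tour for V'. -/

import Mathlib

open Classical

/-- The `p`-norm distance between two points of `ℝ²`. For `p = 2` this is the
Euclidean distance. -/
noncomputable def pdist (p : ℝ) (a b : ℝ × ℝ) : ℝ :=
  (|a.1 - b.1| ^ p + |a.2 - b.2| ^ p) ^ (1 / p)

/-- `L` is a tour (Hamiltonian cycle) of the finite point set `V`. -/
def IsTour (V : Finset (ℝ × ℝ)) (L : List (ℝ × ℝ)) : Prop :=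
  L.Nodup ∧ L.toFinset = V

/-- The (oriented) tour `L` is 2-optimal: for any two distinct directed edges
`(a,b)` and `(x,y)` of the tour, `c(a,x) + c(b,y) ≥ c(a,b) + c(x,y)`. -/
def IsTwoOptimal (p : ℝ) (L : List (ℝ × ℝ)) : Prop :=
  ∀ e ∈ L.zip (L.rotate 1), ∀ f ∈ L.zip (L.rotate 1), e ≠ f →
    pdist p e.1 e.2 + pdist p f.1 f.2 ≤ pdist p e.1 f.1 + pdist p e.2 f.2

/-- The tour `T'` is induced by subdividing the tour `T`: for each vertex `a` of
`T` there is a list `F a` of points, all lying in the interior of the tour edge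
leaving `a` and ordered along this edge, such that `T'` is obtained from `T` by
inserting, after each vertex `a`, the points `F a`.  In particular `T'` and `T`
trace the same polygon in `ℝ²`. -/
def InducedBy (T T' : List (ℝ × ℝ)) : Prop :=
  ∃ F : (ℝ × ℝ) → List (ℝ × ℝ),
    T' = (T.map fun a => a :: F a).flatten ∧
    ∀ e ∈ T.zip (T.rotate 1),
      (∀ z ∈ F e.1, z ∈ openSegment ℝ e.1 e.2) ∧
      List.Chain' (fun u v => v ∈ segment ℝ u e.2) (e.1 :: F e.1)

/-!
Every edge of the induced tour is a sub-edge of an edge of `T`, traversed in the same direction.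
Distances add up along a segment, so for sub-edges of two different edges of `T` the 2-opt
inequality of the parent edges passes to the sub-edges by the triangle inequality. Two sub-edges
of the same edge `[a, z]` have their endpoints in the order `a, b, x, y` towards `z`; then the
exchange `(a, x), (b, y)` is longer than `(a, b), (x, y)` by twice the length of `[b, x]`.
-/

section Geometry

variable {V P : Type*} [SeminormedAddCommGroup V] [NormedSpace ℝ V] [PseudoMetricSpace P]
  [NormedAddTorsor V P]

theorem dist_add_dist_le_of_wbtw {a b x y z : P} (hb : Wbtw ℝ a b z) (hx : Wbtw ℝ b x z)
    (hy : Wbtw ℝ x y z) : dist a b + dist x y ≤ dist a x + dist b y := by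
  have hax := (hb.trans_right_left hx).dist_add_dist
  have hby := (hx.trans_right_left hy).dist_add_dist
  linarith [dist_nonneg (x := b) (y := x)]

theorem dist_add_dist_le_of_wbtw_of_le {a b x y a' b' x' y' : P}
    (ha' : Wbtw ℝ a a' b) (hb' : Wbtw ℝ a' b' b)
    (hx' : Wbtw ℝ x x' y) (hy' : Wbtw ℝ x' y' y)
    (h : dist a b + dist x y ≤ dist a x + dist b y) :
    dist a' b' + dist x' y' ≤ dist a' x' + dist b' y' := by
  have hab := ha'.dist_add_dist
  have ha'b := hb'.dist_add_dist
  have hxy := hx'.dist_add_dist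
  have hx'y := hy'.dist_add_dist
  have hax := dist_triangle4 a a' x' x
  have hby := dist_triangle4 b b' y' y
  linarith [dist_comm x' x, dist_comm b b']

end Geometry

instance {R V P : Type*} [Ring R] [PartialOrder R] [IsOrderedRing R] [AddCommGroup V]
    [Module R V] [AddTorsor V P] (z : P) : Std.Refl fun x y : P => Wbtw R x y z :=
  ⟨fun x => wbtw_self_left R x z⟩

instance {R V P : Type*} [Ring R] [PartialOrder R] [IsOrderedRing R]
    [AddCommGroup V] [Module R V] [AddTorsor V P] (z : P) :
    IsTrans P fun x y => Wbtw R x y z :=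
  ⟨fun _ _ _ h₁ h₂ => h₁.trans_right h₂⟩

theorem Wbtw.toLp {R V : Type*} [Ring R] [PartialOrder R] [AddCommGroup V] [Module R V]
    (p : ENNReal) {x y z : V} (h : Wbtw R x y z) :
    Wbtw R (WithLp.toLp p x) (WithLp.toLp p y) (WithLp.toLp p z) :=
  h.map (WithLp.linearEquiv p R V).symm.toLinearMap.toAffineMap

theorem pdist_two_eq_dist (a b : ℝ × ℝ) :
    pdist 2 a b = dist (WithLp.toLp 2 a) (WithLp.toLp 2 b) := by
  rw [WithLp.prod_dist_eq_of_L2, pdist, Real.sqrt_eq_rpow]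
  simp [Real.dist_eq]

namespace List

variable {α : Type*}

@[simp]
theorem consecutivePairs_cons_cons (x y : α) (l : List α) :
    consecutivePairs (x :: y :: l) = (x, y) :: consecutivePairs (y :: l) :=
  rfl

@[simp]
theorem consecutivePairs_singleton (x : α) : consecutivePairs [x] = [] :=
  rfl

theorem consecutivePairs_append_cons (l : List α) (y : α) (r : List α) :
    consecutivePairs (l ++ y :: r) = consecutivePairs (l ++ [y]) ++ consecutivePairs (y :: r) := by
  induction l with
  | nil => simp
  | cons x l ih =>
    cases l with
    | nil => simp
    | cons x' l => simpa using ih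

theorem zip_rotate_one_eq_consecutivePairs (x : α) (l : List α) :
    (x :: l).zip ((x :: l).rotate 1) = consecutivePairs (x :: l ++ [x]) := by
  have h := zip_append (l₁ := x :: l) (l₂ := l ++ [x]) (r₁ := [x]) (r₂ := []) (by simp)
  simpa [consecutivePairs] using h.symm

theorem consecutivePairs_flatten_map_cons_append (F : α → List α) (c : α) :
    ∀ T : List α, consecutivePairs ((T.map fun a => a :: F a).flatten ++ [c]) =
      (consecutivePairs (T ++ [c])).flatMap fun e => consecutivePairs (e.1 :: F e.1 ++ [e.2])
  | [] => rfl
  | [a] => by simp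
  | a :: a' :: T => by
    have ih := consecutivePairs_flatten_map_cons_append F c (a' :: T)
    simp only [map_cons, flatten_cons, cons_append, append_assoc] at ih ⊢
    rw [← cons_append, consecutivePairs_append_cons, ih]
    simp

theorem zip_rotate_one_flatten_map_cons (F : α → List α) (T : List α) :
    (T.map fun a => a :: F a).flatten.zip ((T.map fun a => a :: F a).flatten.rotate 1) =
      (T.zip (T.rotate 1)).flatMap fun e => consecutivePairs (e.1 :: F e.1 ++ [e.2]) := by
  cases T with
  | nil => rfl
  | cons t T =>
    rw [zip_rotate_one_eq_consecutivePairs, ← consecutivePairs_flatten_map_cons_append]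
    simp only [map_cons, flatten_cons, cons_append]
    rw [zip_rotate_one_eq_consecutivePairs]
    simp

variable {R : α → α → Prop}

theorem IsChain.rel_of_mem_consecutivePairs :
    ∀ {l : List α}, IsChain R l → ∀ {p : α × α}, p ∈ l.consecutivePairs → R p.1 p.2
  | [], _, _, hp => by simp at hp
  | [_], _, _, hp => by simp at hp
  | x :: y :: l, h, p, hp => by
    rw [isChain_cons_cons] at h
    rcases mem_cons.1 hp with rfl | hp
    · exact h.1
    · exact h.2.rel_of_mem_consecutivePairs hp

theorem IsChain.rel_head_of_mem_consecutivePairs [Std.Refl R] [IsTrans α R] :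
    ∀ {a : α} {l : List α}, IsChain R (a :: l) → ∀ {p : α × α},
      p ∈ (a :: l).consecutivePairs → R a p.1
  | _, [], _, _, hp => by simp at hp
  | a, b :: l, h, p, hp => by
    rw [isChain_cons_cons] at h
    rcases mem_cons.1 hp with rfl | hp
    · exact refl _
    · exact _root_.trans h.1 (h.2.rel_head_of_mem_consecutivePairs hp)

theorem IsChain.rel_or_rel_of_mem_consecutivePairs [Std.Refl R] [IsTrans α R] :
    ∀ {l : List α}, IsChain R l → ∀ {p q : α × α}, p ∈ l.consecutivePairs →
      q ∈ l.consecutivePairs → p ≠ q → R p.2 q.1 ∨ R q.2 p.1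
  | [], _, _, _, hp, _, _ => by simp at hp
  | [_], _, _, _, hp, _, _ => by simp at hp
  | x :: y :: l, h, p, q, hp, hq, hpq => by
    rw [isChain_cons_cons] at h
    rcases mem_cons.1 hp with rfl | hp <;> rcases mem_cons.1 hq with rfl | hq
    · exact absurd rfl hpq
    · exact .inl (h.2.rel_head_of_mem_consecutivePairs hq)
    · exact .inr (h.2.rel_head_of_mem_consecutivePairs hp)
    · exact h.2.rel_or_rel_of_mem_consecutivePairs hp hq hpq

end List

theorem List.IsChain.wbtw_append_singleton {R E : Type*} [Ring R] [PartialOrder R]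
    [IsOrderedRing R] [AddCommGroup E] [Module R E] {b : E} {l : List E}
    (h : l.IsChain fun u v => v ∈ segment R u b) :
    (l ++ [b]).IsChain fun u v => Wbtw R u v b := by
  refine (h.imp fun _ _ => mem_segment_iff_wbtw.1).append (List.isChain_singleton b) ?_
  intro x _ y hy
  obtain rfl : b = y := by simpa using hy
  exact wbtw_self_right R x b

theorem pdist_two_add_le_of_mem_consecutivePairs {b : ℝ × ℝ} {l : List (ℝ × ℝ)}
    (hl : l.IsChain fun u v => Wbtw ℝ u v b) {e f : (ℝ × ℝ) × (ℝ × ℝ)}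
    (he : e ∈ l.consecutivePairs) (hf : f ∈ l.consecutivePairs) (hne : e ≠ f) :
    pdist 2 e.1 e.2 + pdist 2 f.1 f.2 ≤ pdist 2 e.1 f.1 + pdist 2 e.2 f.2 := by
  simp only [pdist_two_eq_dist]
  have hee := (hl.rel_of_mem_consecutivePairs he).toLp 2
  have hff := (hl.rel_of_mem_consecutivePairs hf).toLp 2
  rcases hl.rel_or_rel_of_mem_consecutivePairs he hf hne with hef | hfe
  · exact dist_add_dist_le_of_wbtw hee (hef.toLp 2) hff
  · have := dist_add_dist_le_of_wbtw hff (hfe.toLp 2) hee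
    linarith [dist_comm (WithLp.toLp 2 e.1) (WithLp.toLp 2 f.1),
      dist_comm (WithLp.toLp 2 e.2) (WithLp.toLp 2 f.2)]

theorem pdist_two_add_le_of_mem_consecutivePairs_of_le {a b x y : ℝ × ℝ}
    {l m : List (ℝ × ℝ)}
    (hl : (a :: l).IsChain fun u v => Wbtw ℝ u v b)
    (hm : (x :: m).IsChain fun u v => Wbtw ℝ u v y) {e f : (ℝ × ℝ) × (ℝ × ℝ)}
    (he : e ∈ (a :: l).consecutivePairs) (hf : f ∈ (x :: m).consecutivePairs)
    (h : pdist 2 a b + pdist 2 x y ≤ pdist 2 a x + pdist 2 b y) :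
    pdist 2 e.1 e.2 + pdist 2 f.1 f.2 ≤ pdist 2 e.1 f.1 + pdist 2 e.2 f.2 := by
  simp only [pdist_two_eq_dist] at h ⊢
  exact dist_add_dist_le_of_wbtw_of_le ((hl.rel_head_of_mem_consecutivePairs he).toLp 2)
    ((hl.rel_of_mem_consecutivePairs he).toLp 2) ((hm.rel_head_of_mem_consecutivePairs hf).toLp 2)
    ((hm.rel_of_mem_consecutivePairs hf).toLp 2) h

theorem subdivision_preserves_two_optimality_general (T T' : List (ℝ × ℝ)) (h2 : IsTwoOptimal 2 T)
    (hind : InducedBy T T') :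
    IsTwoOptimal 2 T' := by
  obtain ⟨F, rfl, hF⟩ := hind
  have hblock : ∀ e ∈ T.zip (T.rotate 1),
      (e.1 :: F e.1 ++ [e.2]).IsChain fun u v => Wbtw ℝ u v e.2 :=
    fun e he => List.IsChain.wbtw_append_singleton (hF e he).2
  intro e' he' f' hf' hne
  rw [List.zip_rotate_one_flatten_map_cons] at he' hf'
  obtain ⟨e, he, he'⟩ := List.mem_flatMap.1 he'
  obtain ⟨f, hf, hf'⟩ := List.mem_flatMap.1 hf'
  by_cases hef : e = f
  · subst hef
    exact pdist_two_add_le_of_mem_consecutivePairs (hblock e he) he' hf' hne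
  · exact pdist_two_add_le_of_mem_consecutivePairs_of_le (hblock e he) (hblock f hf) he' hf'
      (h2 e he f hf hef)

/-- If `T` is a 2-optimal tour for `V`, `V'` is a subdivision for `(V, T)` and
`T'` is the tour of `V'` induced by `V'`, then `T'` is a 2-optimal tour
for `V'`. -/
theorem subdivision_preserves_two_optimality (V V' : Finset (ℝ × ℝ))
    (T T' : List (ℝ × ℝ)) (hT : IsTour V T) (h2 : IsTwoOptimal 2 T)
    (hT' : IsTour V' T') (hind : InducedBy T T') :
    IsTwoOptimal 2 T' :=
  subdivision_preserves_two_optimality_general T T' h2 hind
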